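/- For every integer p ≥ 3 there exists an integer N such that every arrangement of at least N circles in the plane contains p circles every three of which form a Krupp triple, or p circles every three of which form a NonKrupp triple. -/

import Mathlib

/-
On circle `j`, the power of a point with respect to circle `i` agrees with the difference of the
powers with respect to `i` and `j`, an affine function vanishing on the chord that `i` cuts out of
`j`. Hence circle `k` separates the two points of `i ∩ j` iff the chords cut out of `j` by `i` and
by `k` cross, a condition symmetric in `i` and `k`. So in an arrangement a triple is Krupp or
NonKrupp according to any one of its circles, and Ramsey's theorem for two-colourings of 3-sets
finishes the proof.
-/

noncomputable section

/-- The Euclidean plane. -/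
abbrev E2 := EuclideanSpace ℝ (Fin 2)

/-- The circle with center `c` and radius `r` separates the points `p` and `q`
(not lying on it) if exactly one of them lies in its open disk. -/
def Separates (c : E2) (r : ℝ) (p q : E2) : Prop :=
  Xor' (p ∈ Metric.ball c r) (q ∈ Metric.ball c r)

/-- The circle with center `c`, radius `r` separates the two intersection points of the
other two circles. -/
def SepInt (c : E2) (r : ℝ) (c₁ : E2) (r₁ : ℝ) (c₂ : E2) (r₂ : ℝ) : Prop :=
  ∀ p q : E2, p ≠ q → Metric.sphere c₁ r₁ ∩ Metric.sphere c₂ r₂ = {p, q} →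
    Separates c r p q

/-- The circle with center `c`, radius `r` does not separate the two intersection points of
the other two circles. -/
def NonSepInt (c : E2) (r : ℝ) (c₁ : E2) (r₁ : ℝ) (c₂ : E2) (r₂ : ℝ) : Prop :=
  ∀ p q : E2, p ≠ q → Metric.sphere c₁ r₁ ∩ Metric.sphere c₂ r₂ = {p, q} →
    ¬ Separates c r p q

open EuclideanGeometry AffineMap Module RealInnerProductSpace

section Power

variable {V : Type*} [NormedAddCommGroup V] [InnerProductSpace ℝ V]

namespace EuclideanGeometry.Sphere

theorem power_lineMap (s : Sphere V) (x y : V) (t : ℝ) :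
    s.power (lineMap x y t) =
      (1 - t) * s.power x + t * s.power y - t * (1 - t) * dist x y ^ 2 := by
  have hy : y - s.center = (x - s.center) + (y - x) := by abel
  have hz : lineMap x y t - s.center = (x - s.center) + t • (y - x) := by
    rw [lineMap_apply_module']; abel
  simp only [power, dist_eq_norm, hy, hz, norm_add_sq_real, norm_smul, inner_smul_right,
    Real.norm_eq_abs, mul_pow, sq_abs, norm_sub_rev x y]
  ring

theorem power_sub_power_sub_power_sub_power (s s' : Sphere V) (x y : V) :
    (s.power x - s'.power x) - (s.power y - s'.power y) =
      2 * ⟪s'.center - s.center, x - y⟫ := by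
  simp only [power, dist_eq_norm, ← real_inner_self_eq_norm_sq, inner_sub_left, inner_sub_right,
    real_inner_comm s.center, real_inner_comm s'.center]
  ring

theorem exists_power_neg_eq_of_mul_neg {o s s' : Sphere V} {p q : V} (hpo : o.power p = 0)
    (hqo : o.power q = 0) (hps : s.power p = 0) (hqs : s.power q = 0)
    (hsep : s'.power p * s'.power q < 0) :
    ∃ z, o.power z < 0 ∧ s.power z = o.power z ∧ s'.power z = o.power z := by
  set P := s'.power p
  set Q := s'.power q
  have hPQ : P - Q ≠ 0 := fun h => by
    rw [show Q = P by linarith] at hsep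
    nlinarith [mul_self_nonneg P]
  have hpq : p ≠ q := by rintro rfl; nlinarith [mul_self_nonneg P]
  obtain ⟨t, htPQ⟩ : ∃ t, t * (P - Q) = P := ⟨P / (P - Q), div_mul_cancel₀ P hPQ⟩
  have ht : 0 < t * (1 - t) := by
    have h : t * (1 - t) * (P - Q) ^ 2 = -(P * Q) := by
      linear_combination (-(t * (P - Q) + Q)) * htPQ
    exact (pos_iff_pos_of_mul_pos (by rw [h]; linarith)).2 (by positivity)
  have hpower (r : Sphere V) : r.power (lineMap p q t) - o.power (lineMap p q t) =
      (1 - t) * (r.power p - o.power p) + t * (r.power q - o.power q) := by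
    simp only [power_lineMap]; ring
  refine ⟨lineMap p q t, ?_, ?_, ?_⟩
  · rw [power_lineMap, hpo, hqo]
    nlinarith [pow_pos (dist_pos.2 hpq) 2]
  · linear_combination hpower s + (1 - t) * hps + t * hqs - (1 - t) * hpo - t * hqo
  · linear_combination hpower s' - htPQ - (1 - t) * hpo - t * hqo

theorem exists_lineMap_eq_of_power_neg [Fact (finrank ℝ V = 2)] {o s : Sphere V} {u w z : V}
    (hcenter : o.center ≠ s.center) (huo : o.power u = 0) (hwo : o.power w = 0)
    (hus : s.power u = 0) (hws : s.power w = 0) (huw : u ≠ w) (hzs : s.power z = o.power z)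
    (hzo : o.power z < 0) : ∃ a ∈ Set.Ioo (0 : ℝ) 1, lineMap u w a = z := by
  have hperp {x : V} (hx : s.power x = o.power x) : ⟪o.center - s.center, x - u⟫ = 0 := by
    linear_combination (-1 / 2 : ℝ) * power_sub_power_sub_power_sub_power s o x u + hx / 2 -
      hus / 2 + huo / 2
  obtain ⟨a, ha⟩ := Submodule.mem_span_singleton.1 <|
    Submodule.mem_span_singleton_of_inner_eq_zero_of_inner_eq_zero (sub_ne_zero.2 hcenter)
      (sub_ne_zero.2 huw.symm) (hperp hzs) (hperp (hws.trans hwo.symm))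
  have hz : lineMap u w a = z := by rw [lineMap_apply_module', ha]; abel
  rw [← hz, power_lineMap, huo, hwo] at hzo
  have h : 0 < a * (1 - a) * dist u w ^ 2 := by linarith
  have h' := (pos_iff_pos_of_mul_pos h).2 (pow_pos (dist_pos.2 huw) 2)
  exact ⟨a, ⟨by nlinarith, by nlinarith⟩, hz⟩

/-- On `o`, the power with respect to `s` agrees with `s.power - o.power`, an affine function
vanishing on the line of the chord `pq` that `s` cuts out of `o`; likewise for `s'` and `uw`. So
this says: if the line of `uw` separates `p` from `q`, then the line of `pq` separates `u` from
`w`. -/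
theorem power_mul_power_neg_of_chords [Fact (finrank ℝ V = 2)] {o s s' : Sphere V}
    {p q u w : V} (hpo : o.power p = 0) (hqo : o.power q = 0) (huo : o.power u = 0)
    (hwo : o.power w = 0) (hps : s.power p = 0) (hqs : s.power q = 0) (hus' : s'.power u = 0)
    (hws' : s'.power w = 0) (huw : u ≠ w) (hsep : s'.power p * s'.power q < 0)
    (hus : s.power u ≠ 0) : s.power u * s.power w < 0 := by
  have hcenter : o.center ≠ s'.center := fun h => by
    have := power_sub_power_sub_power_sub_power s' o p q
    rw [h, sub_self, inner_zero_left, hpo, hqo] at this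
    rw [show s'.power q = s'.power p by linarith] at hsep
    nlinarith [mul_self_nonneg (s'.power p)]
  obtain ⟨z, hzo, hzs, hzs'⟩ := exists_power_neg_eq_of_mul_neg hpo hqo hps hqs hsep
  obtain ⟨a, ⟨ha₀, ha₁⟩, rfl⟩ :=
    exists_lineMap_eq_of_power_neg hcenter huo hwo hus' hws' huw hzs' hzo
  rw [power_lineMap, power_lineMap, huo, hwo] at hzs
  have hcomb : a * (s.power u * s.power w) = -((1 - a) * (s.power u * s.power u)) := by
    linear_combination s.power u * hzs
  exact neg_of_mul_neg_right (hcomb ▸ neg_neg_of_pos (mul_pos (sub_pos.2 ha₁)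
    (mul_self_pos.2 hus))) ha₀.le

end EuclideanGeometry.Sphere

end Power

section Separation

open scoped EuclideanSpace

theorem separates_comm {c : E2} {r : ℝ} {x y : E2} : Separates c r x y ↔ Separates c r y x := by
  unfold Separates
  exact Iff.of_eq (xor_comm _ _)

theorem separates_iff_power_mul_neg {s : Sphere E2} {x y : E2} (hr : 0 ≤ s.radius)
    (hx : s.power x ≠ 0) (hy : s.power y ≠ 0) :
    Separates s.center s.radius x y ↔ s.power x * s.power y < 0 := by
  change Xor (x ∈ Metric.ball _ _) (y ∈ Metric.ball _ _) ↔ _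
  simp only [xor_def, Metric.mem_ball, ← Sphere.power_neg_iff_dist_center_lt_radius hr,
    mul_neg_iff]
  grind

theorem separates_iff_separates_of_inter_eq_pair {s₁ s₂ s₃ : Sphere E2} {p q u w : E2}
    (hpq : p ≠ q) (huw : u ≠ w) (h₁₂ : (s₁ : Set E2) ∩ s₂ = {p, q})
    (h₂₃ : (s₂ : Set E2) ∩ s₃ = {u, w}) (h₁₂₃ : ∀ x, x ∈ s₁ → x ∈ s₂ → x ∉ s₃) :
    Separates s₃.center s₃.radius p q ↔ Separates s₁.center s₁.radius u w := by
  have hp : p ∈ (s₁ : Set E2) ∩ s₂ := h₁₂ ▸ Set.mem_insert p {q}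
  have hq : q ∈ (s₁ : Set E2) ∩ s₂ := h₁₂ ▸ Set.mem_insert_of_mem p rfl
  have hu : u ∈ (s₂ : Set E2) ∩ s₃ := h₂₃ ▸ Set.mem_insert u {w}
  have hw : w ∈ (s₂ : Set E2) ∩ s₃ := h₂₃ ▸ Set.mem_insert_of_mem u rfl
  have hpow {s : Sphere E2} {x : E2} (hx : x ∈ s) : s.power x = 0 :=
    (Sphere.power_eq_zero_iff_mem_sphere (Sphere.radius_nonneg_of_mem hx)).2 hx
  have hr₁ := Sphere.radius_nonneg_of_mem hp.1
  have hr₃ := Sphere.radius_nonneg_of_mem hu.2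
  have hp₃ : s₃.power p ≠ 0 :=
    fun h => h₁₂₃ p hp.1 hp.2 ((Sphere.power_eq_zero_iff_mem_sphere hr₃).1 h)
  have hq₃ : s₃.power q ≠ 0 :=
    fun h => h₁₂₃ q hq.1 hq.2 ((Sphere.power_eq_zero_iff_mem_sphere hr₃).1 h)
  have hu₁ : s₁.power u ≠ 0 :=
    fun h => h₁₂₃ u ((Sphere.power_eq_zero_iff_mem_sphere hr₁).1 h) hu.1 hu.2
  have hw₁ : s₁.power w ≠ 0 :=
    fun h => h₁₂₃ w ((Sphere.power_eq_zero_iff_mem_sphere hr₁).1 h) hw.1 hw.2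
  rw [separates_iff_power_mul_neg hr₃ hp₃ hq₃, separates_iff_power_mul_neg hr₁ hu₁ hw₁]
  exact ⟨fun h => Sphere.power_mul_power_neg_of_chords (hpow hp.2) (hpow hq.2) (hpow hu.1)
      (hpow hw.1) (hpow hp.1) (hpow hq.1) (hpow hu.2) (hpow hw.2) huw h hu₁,
    fun h => Sphere.power_mul_power_neg_of_chords (hpow hu.1) (hpow hw.1) (hpow hp.2)
      (hpow hq.2) (hpow hu.2) (hpow hw.2) (hpow hp.1) (hpow hq.1) hpq h hp₃⟩

theorem Set.forall_ne_eq_pair_iff {α : Type*} {P : α → α → Prop} (hP : ∀ x y, P x y → P y x)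
    {S : Set α} {x y : α} (hxy : x ≠ y) (hS : S = {x, y}) :
    (∀ p q, p ≠ q → S = {p, q} → P p q) ↔ P x y := by
  refine ⟨fun h => h x y hxy hS, fun h p q _ hpq => ?_⟩
  rcases Set.pair_eq_pair_iff.1 (hpq.symm.trans hS) with ⟨rfl, rfl⟩ | ⟨rfl, rfl⟩
  exacts [h, hP _ _ h]

variable {c c₁ c₂ x y : E2} {r r₁ r₂ : ℝ}

theorem sepInt_iff_separates (hxy : x ≠ y)
    (h : Metric.sphere c₁ r₁ ∩ Metric.sphere c₂ r₂ = {x, y}) :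
    SepInt c r c₁ r₁ c₂ r₂ ↔ Separates c r x y :=
  Set.forall_ne_eq_pair_iff (fun _ _ => separates_comm.1) hxy h

theorem nonSepInt_iff_not_separates (hxy : x ≠ y)
    (h : Metric.sphere c₁ r₁ ∩ Metric.sphere c₂ r₂ = {x, y}) :
    NonSepInt c r c₁ r₁ c₂ r₂ ↔ ¬ Separates c r x y :=
  Set.forall_ne_eq_pair_iff (fun _ _ => mt separates_comm.2) hxy h

theorem sepInt_comm : SepInt c r c₁ r₁ c₂ r₂ ↔ SepInt c r c₂ r₂ c₁ r₁ := by
  unfold SepInt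
  rw [Set.inter_comm]

end Separation

section Arrangement

variable {ι : Type*}

structure IsArrangement (ctr : ι → E2) (rad : ι → ℝ) : Prop where
  exists_inter_eq_pair : ∀ i j : ι, i ≠ j → ∃ x y : E2, x ≠ y ∧
    Metric.sphere (ctr i) (rad i) ∩ Metric.sphere (ctr j) (rad j) = {x, y}
  no_triple_point : ∀ i j k : ι, i ≠ j → i ≠ k → j ≠ k → ∀ x : E2,
    ¬ (x ∈ Metric.sphere (ctr i) (rad i) ∧ x ∈ Metric.sphere (ctr j) (rad j) ∧
      x ∈ Metric.sphere (ctr k) (rad k))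

namespace IsArrangement

variable {ctr : ι → E2} {rad : ι → ℝ} (hA : IsArrangement ctr rad) {i j k : ι}
include hA

theorem sepInt_rotate (hij : i ≠ j) (hik : i ≠ k) (hjk : j ≠ k) :
    SepInt (ctr i) (rad i) (ctr j) (rad j) (ctr k) (rad k) ↔
      SepInt (ctr j) (rad j) (ctr k) (rad k) (ctr i) (rad i) := by
  obtain ⟨p, q, hpq, hjk'⟩ := hA.exists_inter_eq_pair j k hjk
  obtain ⟨u, w, huw, hki⟩ := hA.exists_inter_eq_pair k i hik.symm
  rw [sepInt_iff_separates hpq hjk', sepInt_iff_separates huw hki]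
  exact separates_iff_separates_of_inter_eq_pair (s₁ := ⟨ctr j, rad j⟩) (s₂ := ⟨ctr k, rad k⟩)
    (s₃ := ⟨ctr i, rad i⟩) hpq huw hjk' hki
    fun x hj hk hi => hA.no_triple_point i j k hij hik hjk x ⟨hi, hj, hk⟩

theorem nonSepInt_iff_not_sepInt (hjk : j ≠ k) :
    NonSepInt (ctr i) (rad i) (ctr j) (rad j) (ctr k) (rad k) ↔
      ¬ SepInt (ctr i) (rad i) (ctr j) (rad j) (ctr k) (rad k) := by
  obtain ⟨p, q, hpq, h⟩ := hA.exists_inter_eq_pair j k hjk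
  rw [nonSepInt_iff_not_separates hpq h, sepInt_iff_separates hpq h]

end IsArrangement

end Arrangement

universe u

section Ramsey

open Finset

variable {κ : Type*}

def IsMonochromatic {α : Type*} (c : Finset α → κ) (r : ℕ) (b : κ) (T : Finset α) : Prop :=
  ∀ s ⊆ T, #s = r → c s = b

def IsRamseyBound (r : ℕ) (m : κ → ℕ) (N : ℕ) : Prop :=
  ∀ {α : Type u} (S : Finset α) (c : Finset α → κ), N ≤ #S →
    ∃ b, ∃ T ⊆ S, #T = m b ∧ IsMonochromatic c r b T

theorem IsMonochromatic.insert {α : Type*} [DecidableEq α] {c : Finset α → κ} {r : ℕ} {b : κ}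
    {v : α} {T U : Finset α} (hT : IsMonochromatic (fun s => c (insert v s)) r b T)
    (hUT : U ⊆ T) (hU : IsMonochromatic c (r + 1) b U) :
    IsMonochromatic c (r + 1) b (insert v U) := by
  intro s hs hcard
  by_cases hv : v ∈ s
  · rw [← insert_erase hv]
    exact hT _ ((subset_insert_iff.1 hs).trans hUT) (by rw [card_erase_of_mem hv, hcard]; rfl)
  · exact hU s ((subset_insert_iff_of_notMem hv).1 hs) hcard

theorem isRamseyBound_zero [Fintype κ] (m : κ → ℕ) : IsRamseyBound.{u} 0 m (∑ b, m b) := by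
  intro α S c hS
  obtain ⟨T, hTS, hT⟩ :=
    exists_subset_card_eq ((single_le_sum (by simp) (mem_univ (c ∅))).trans hS)
  exact ⟨c ∅, T, hTS, hT, fun s _ hs => by rw [card_eq_zero.1 hs]⟩

theorem exists_isRamseyBound_succ [Fintype κ] {r : ℕ}
    (ih : ∀ m : κ → ℕ, ∃ N, IsRamseyBound.{u} r m N) (m : κ → ℕ) :
    ∃ N, IsRamseyBound.{u} (r + 1) m N := by
  classical
  induction hk : ∑ b, m b using Nat.strong_induction_on generalizing m with
  | _ k ihk =>
  by_cases hm : ∃ b, m b = 0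
  · obtain ⟨b, hb⟩ := hm
    exact ⟨0, fun S c _ => ⟨b, ∅, empty_subset _, by simp [hb], fun s hs hcard => by
      simp [subset_empty.1 hs] at hcard⟩⟩
  simp only [not_exists] at hm
  have hlt (b : κ) : ∑ b', Function.update m b (m b - 1) b' < k := hk ▸
    sum_lt_sum (fun b' _ => by rcases eq_or_ne b' b with rfl | h <;> simp [*])
      ⟨b, mem_univ b, by simpa using Nat.pos_of_ne_zero (hm b)⟩
  choose Nb hNb using fun b => ihk _ (hlt b) _ rfl
  obtain ⟨M, hM⟩ := ih Nb
  refine ⟨M + 1, fun S c hS => ?_⟩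
  obtain ⟨v, hv⟩ : S.Nonempty := card_pos.1 (by omega)
  obtain ⟨b, T, hTS, hT, hlink⟩ :=
    hM (S.erase v) (fun s => c (insert v s)) (by rw [card_erase_of_mem hv]; omega)
  obtain ⟨b', U, hUT, hU, hmono⟩ := hNb b T c hT.ge
  have hUS : U ⊆ S := hUT.trans (hTS.trans (erase_subset v S))
  by_cases hb : b' = b
  · subst hb
    have hvU : v ∉ U := fun h => by simpa using hTS (hUT h)
    refine ⟨b', insert v U, insert_subset hv hUS, ?_, IsMonochromatic.insert hlink hUT hmono⟩
    rw [card_insert_of_notMem hvU, hU, Function.update_self]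
    have := hm b'
    omega
  · exact ⟨b', U, hUS, by rwa [Function.update_of_ne hb] at hU, hmono⟩

theorem exists_isRamseyBound [Fintype κ] (r : ℕ) (m : κ → ℕ) :
    ∃ N, IsRamseyBound.{u} r m N := by
  induction r generalizing m with
  | zero => exact ⟨_, isRamseyBound_zero m⟩
  | succ r ih => exact exists_isRamseyBound_succ ih m

end Ramsey

section Triplewise

open Finset

variable {ι : Type*}

def Triplewise (R : ι → ι → ι → Prop) (T : Finset ι) : Prop :=
  ∀ i ∈ T, ∀ j ∈ T, ∀ k ∈ T, i ≠ j → i ≠ k → j ≠ k → R i j k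

theorem triplewise_of_forall_card_eq_three [DecidableEq ι] {R : ι → ι → ι → Prop}
    {T : Finset ι} (h : ∀ s ⊆ T, #s = 3 → Triplewise R s) : Triplewise R T :=
  fun i hi j hj k hk hij hik hjk =>
    h {i, j, k} (by simp [insert_subset_iff, *]) (card_eq_three.2 ⟨i, j, k, hij, hik, hjk, rfl⟩)
      i (by simp) j (by simp) k (by simp) hij hik hjk

theorem iff_of_mem_triple [DecidableEq ι] {R : ι → ι → ι → Prop}
    (hrot : ∀ ⦃i j k⦄, i ≠ j → i ≠ k → j ≠ k → (R i j k ↔ R j k i))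
    (hswap : ∀ i j k, R i j k ↔ R i k j) {a b c i j k : ι} (hab : a ≠ b) (hac : a ≠ c)
    (hbc : b ≠ c) (hi : i ∈ ({a, b, c} : Finset ι)) (hj : j ∈ ({a, b, c} : Finset ι))
    (hk : k ∈ ({a, b, c} : Finset ι)) (hij : i ≠ j) (hik : i ≠ k) (hjk : j ≠ k) :
    R i j k ↔ R a b c := by
  have := hrot hab hac hbc
  have := hrot hbc hab.symm hac.symm
  have := hswap a b c
  have := hswap b c a
  have := hswap c a b
  simp only [mem_insert, mem_singleton] at hi hj hk
  rcases hi with rfl | rfl | rfl <;> rcases hj with rfl | rfl | rfl <;>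
    rcases hk with rfl | rfl | rfl <;> tauto

def KruppPacked (ctr : ι → E2) (rad : ι → ℝ) : Finset ι → Prop :=
  Triplewise fun i j k => SepInt (ctr i) (rad i) (ctr j) (rad j) (ctr k) (rad k)

def NonKruppPacked (ctr : ι → E2) (rad : ι → ℝ) : Finset ι → Prop :=
  Triplewise fun i j k => NonSepInt (ctr i) (rad i) (ctr j) (rad j) (ctr k) (rad k)

theorem IsArrangement.kruppPacked_or_nonKruppPacked_of_card_eq_three {ctr : ι → E2}
    {rad : ι → ℝ} (hA : IsArrangement ctr rad) {s : Finset ι} (hs : #s = 3) :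
    KruppPacked ctr rad s ∨ NonKruppPacked ctr rad s := by
  classical
  obtain ⟨a, b, c, hab, hac, hbc, rfl⟩ := card_eq_three.1 hs
  have key {i j k : ι} (hi : i ∈ ({a, b, c} : Finset ι)) (hj : j ∈ ({a, b, c} : Finset ι))
      (hk : k ∈ ({a, b, c} : Finset ι)) (hij : i ≠ j) (hik : i ≠ k) (hjk : j ≠ k) :=
    iff_of_mem_triple (fun _ _ _ => hA.sepInt_rotate) (fun _ _ _ => sepInt_comm) hab hac hbc
      hi hj hk hij hik hjk
  by_cases h : SepInt (ctr a) (rad a) (ctr b) (rad b) (ctr c) (rad c)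
  · exact .inl fun i hi j hj k hk hij hik hjk => (key hi hj hk hij hik hjk).2 h
  · exact .inr fun i hi j hj k hk hij hik hjk =>
      (hA.nonSepInt_iff_not_sepInt hjk).2 ((key hi hj hk hij hik hjk).not.2 h)

theorem exists_kruppPacked_or_nonKruppPacked (p : ℕ) :
    ∃ N : ℕ, ∀ {ι : Type u} (ctr : ι → E2) (rad : ι → ℝ), IsArrangement ctr rad →
      ∀ S : Finset ι, N ≤ #S → ∃ T ⊆ S, #T = p ∧
        (KruppPacked ctr rad T ∨ NonKruppPacked ctr rad T) := by
  classical
  obtain ⟨N, hN⟩ := exists_isRamseyBound.{u} 3 (fun _ : Bool => p)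
  refine ⟨N, fun ctr rad hA S hS => ?_⟩
  obtain ⟨b, T, hTS, hT, hmono⟩ := hN S (fun s => decide (KruppPacked ctr rad s)) hS
  refine ⟨T, hTS, hT, ?_⟩
  cases b
  · exact .inr <| triplewise_of_forall_card_eq_three fun s hs h3 =>
      (hA.kruppPacked_or_nonKruppPacked_of_card_eq_three h3).resolve_left
        (of_decide_eq_false (hmono s hs h3))
  · exact .inl <| triplewise_of_forall_card_eq_three fun s hs h3 =>
      of_decide_eq_true (hmono s hs h3)

end Triplewise

theorem stmt3_general (p : ℕ) :
    ∃ N : ℕ, ∀ n : ℕ, N ≤ n → ∀ ctr : Fin n → E2, ∀ rad : Fin n → ℝ,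
      (∀ i, 0 < rad i) →
      (∀ i j : Fin n, i ≠ j → ∃ x y : E2, x ≠ y ∧
        Metric.sphere (ctr i) (rad i) ∩ Metric.sphere (ctr j) (rad j) = {x, y}) →
      (∀ i j k : Fin n, i ≠ j → i ≠ k → j ≠ k → ∀ x : E2,
        ¬ (x ∈ Metric.sphere (ctr i) (rad i) ∧ x ∈ Metric.sphere (ctr j) (rad j) ∧
          x ∈ Metric.sphere (ctr k) (rad k))) →
      ∃ f : Fin p → Fin n, Function.Injective f ∧
        ((∀ a b c : Fin p, a ≠ b → a ≠ c → b ≠ c →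
            SepInt (ctr (f a)) (rad (f a)) (ctr (f b)) (rad (f b)) (ctr (f c)) (rad (f c))) ∨
         (∀ a b c : Fin p, a ≠ b → a ≠ c → b ≠ c →
            NonSepInt (ctr (f a)) (rad (f a)) (ctr (f b)) (rad (f b)) (ctr (f c)) (rad (f c)))) := by
  obtain ⟨N, hN⟩ := exists_kruppPacked_or_nonKruppPacked.{0} p
  refine ⟨N, fun n hn ctr rad _ hInt hTriple => ?_⟩
  obtain ⟨T, -, hT, hpacked⟩ := hN ctr rad ⟨hInt, hTriple⟩ Finset.univ (by simpa using hn)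
  let f := T.orderEmbOfFin hT
  have hf (a : Fin p) : f a ∈ T := T.orderEmbOfFin_mem hT a
  refine ⟨f, f.injective, hpacked.imp ?_ ?_⟩ <;>
    exact fun h a b c hab hac hbc => h _ (hf a) _ (hf b) _ (hf c) (f.injective.ne hab)
      (f.injective.ne hac) (f.injective.ne hbc)

/-- For every integer `p ≥ 3` there exists an integer `N` such that every arrangement of at
least `N` circles in the plane contains `p` circles every three of which form a Krupp triple,
or `p` circles every three of which form a NonKrupp triple. -/
theorem stmt3 (p : ℕ) (hp : 3 ≤ p) :
    ∃ N : ℕ, ∀ n : ℕ, N ≤ n → ∀ ctr : Fin n → E2, ∀ rad : Fin n → ℝ,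
      (∀ i, 0 < rad i) →
      (∀ i j : Fin n, i ≠ j → ∃ x y : E2, x ≠ y ∧
        Metric.sphere (ctr i) (rad i) ∩ Metric.sphere (ctr j) (rad j) = {x, y}) →
      (∀ i j k : Fin n, i ≠ j → i ≠ k → j ≠ k → ∀ x : E2,
        ¬ (x ∈ Metric.sphere (ctr i) (rad i) ∧ x ∈ Metric.sphere (ctr j) (rad j) ∧
          x ∈ Metric.sphere (ctr k) (rad k))) →
      ∃ f : Fin p → Fin n, Function.Injective f ∧
        ((∀ a b c : Fin p, a ≠ b → a ≠ c → b ≠ c →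
            SepInt (ctr (f a)) (rad (f a)) (ctr (f b)) (rad (f b)) (ctr (f c)) (rad (f c))) ∨
         (∀ a b c : Fin p, a ≠ b → a ≠ c → b ≠ c →
            NonSepInt (ctr (f a)) (rad (f a)) (ctr (f b)) (rad (f b)) (ctr (f c)) (rad (f c)))) :=
  stmt3_general p
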